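/- arXiv:2411.10795 — 4 statements merged into one kernel-verified Lean document; each statement's English description precedes it below -/
import Mathlib

section
/- For every k ≥ 0, assuming each x_j is integrable, the conditional expectation of the state d steps ahead satisfies, almost surely, E[x_{k+d} | F_{k−1}] = A^d x_k + Σ_{i=1}^d A^{i−1} B u_{k−i}, where for negative indices u_{k−i} denotes the corresponding deterministic initial control. -/
/-
Conditioning on `F_{k-1}`, the multiplicative-noise term `ω_m (Ā x_m + B̄ u_{m-d})` of every
step `m ≥ k` has zero conditional expectation: `ω_m` is centred and independent of `F_{m-1}`, for
which the gain `Ā x_m + B̄ u_{m-d}` is measurable. For `m ≤ k + d` the delayed control `u_{m-d}`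
is itself `F_{k-1}`-measurable, so `E[x_{m+1} | F_{k-1}] = A E[x_m | F_{k-1}] + B u_{m-d}`;
iterating `d` times from `E[x_k | F_{k-1}] = x_k` gives the formula. The same independence makes
every `x_m` integrable, by induction on `m`.
-/

open MeasureTheory ProbabilityTheory Matrix

noncomputable section

/-- The σ-algebra `F_{k−1}`, with `F_{−1}` the trivial σ-algebra. -/
def Fm1 {Ω : Type*} (F : ℕ → MeasurableSpace Ω) : ℕ → MeasurableSpace Ω
  | 0 => ⊥
  | k + 1 => F k

/-- The control extended to all integer times: deterministic initial controls `uinit j`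
for `j < 0` and the adapted control `u j` for `j ≥ 0`. -/
def uext {mu : ℕ} {Ω : Type*} (uinit : ℤ → Fin mu → ℝ) (u : ℕ → Ω → Fin mu → ℝ)
    (j : ℤ) (w : Ω) : Fin mu → ℝ :=
  if 0 ≤ j then u j.toNat w else uinit j

/-- The state trajectory of `x_{k+1} = (A + ω_k Ā) x_k + (B + ω_k B̄) u_{k−d}`
with initial state `x0` and initial controls `uinit`. -/
def traj {n mu : ℕ} {Ω : Type*} (d : ℕ) (A Abar : Matrix (Fin n) (Fin n) ℝ)
    (B Bbar : Matrix (Fin n) (Fin mu) ℝ) (noise : ℕ → Ω → ℝ) (x0 : Fin n → ℝ)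
    (uinit : ℤ → Fin mu → ℝ) (u : ℕ → Ω → Fin mu → ℝ) : ℕ → Ω → Fin n → ℝ
  | 0, _ => x0
  | k + 1, w =>
      (A + noise k w • Abar).mulVec (traj d A Abar B Bbar noise x0 uinit u k w)
        + (B + noise k w • Bbar).mulVec (uext uinit u ((k : ℤ) - (d : ℤ)) w)

section IndependentFactor

variable {Ω E : Type*} {m m₀ : MeasurableSpace Ω} {μ : Measure Ω}
  [NormedAddCommGroup E] [NormedSpace ℝ E] [MeasurableSpace E] [BorelSpace E]
  {ξ : Ω → ℝ} {g : Ω → E}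

lemma integrable_smul_of_indep (hξg : Indep (MeasurableSpace.comap ξ inferInstance) m μ)
    (hξ : Integrable ξ μ) (hg_meas : StronglyMeasurable[m] g) (hg : Integrable g μ) :
    Integrable (ξ • g) μ :=
  IndepFun.integrable_smul ((IndepFun_iff_Indep ξ g μ).2
    (indep_of_indep_of_le_right hξg hg_meas.measurable.comap_le)) hξ hg

lemma condExp_smul_ae_eq_zero_of_indep [CompleteSpace E] [IsProbabilityMeasure μ]
    {m' : MeasurableSpace Ω} (hm' : m' ≤ m) (hm : m ≤ m₀) (hξ_meas : Measurable[m₀] ξ)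
    (hξg : Indep (MeasurableSpace.comap ξ inferInstance) m μ)
    (hξ : Integrable ξ μ) (hξ_mean : ∫ w, ξ w ∂μ = 0)
    (hg_meas : StronglyMeasurable[m] g) (hg : Integrable g μ) :
    μ[ξ • g | m'] =ᵐ[μ] 0 := by
  have hξ_condExp : μ[ξ | m] =ᵐ[μ] fun _ => ∫ w, ξ w ∂μ :=
    condExp_indep_eq hξ_meas.comap_le hm (comap_measurable ξ).stronglyMeasurable hξg
  have h_condExp : μ[ξ • g | m] =ᵐ[μ] 0 := by
    filter_upwards [condExp_smul_of_aestronglyMeasurable_right hξ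
      (integrable_smul_of_indep hξg hξ hg_meas hg) hg_meas.aestronglyMeasurable, hξ_condExp]
      with w hw hξw
    simp [hw, hξw, hξ_mean]
  calc μ[ξ • g | m'] =ᵐ[μ] μ[μ[ξ • g | m] | m'] := (condExp_condExp_of_le hm' hm).symm
    _ =ᵐ[μ] μ[0 | m'] := condExp_congr_ae h_condExp
    _ = 0 := condExp_zero

end IndependentFactor

def Matrix.mulVecCLM {n p : ℕ} (M : Matrix (Fin n) (Fin p) ℝ) : (Fin p → ℝ) →L[ℝ] Fin n → ℝ :=
  LinearMap.toContinuousLinearMap M.mulVecLin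

lemma MeasureTheory.Integrable.const_mulVec {Ω : Type*} {mΩ : MeasurableSpace Ω} {μ : Measure Ω}
    {n p : ℕ} (M : Matrix (Fin n) (Fin p) ℝ) {f : Ω → Fin p → ℝ} (hf : Integrable f μ) :
    Integrable (fun w => M *ᵥ f w) μ :=
  M.mulVecCLM.integrable_comp hf

lemma Fm1_le {Ω : Type*} {m₀ : MeasurableSpace Ω} {F : ℕ → MeasurableSpace Ω}
    (hF_le : ∀ k, F k ≤ m₀) : ∀ k, Fm1 F k ≤ m₀
  | 0 => bot_le
  | k + 1 => hF_le k

lemma Fm1_mono {Ω : Type*} {F : ℕ → MeasurableSpace Ω} (hF_mono : Monotone F) :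
    Monotone (Fm1 F) := by
  refine monotone_nat_of_le_succ fun k => ?_
  cases k with
  | zero => exact bot_le
  | succ k => exact hF_mono k.le_succ

section ControlledSystem

variable {Ω : Type*} {mΩ : MeasurableSpace Ω} {μ : Measure Ω} {F : ℕ → MeasurableSpace Ω}
  {noise : ℕ → Ω → ℝ} {n mu d : ℕ} {A Abar : Matrix (Fin n) (Fin n) ℝ}
  {B Bbar : Matrix (Fin n) (Fin mu) ℝ} {x0 : Fin n → ℝ} {uinit : ℤ → Fin mu → ℝ}
  {u : ℕ → Ω → Fin mu → ℝ}

local notation "𝐱" => traj d A Abar B Bbar noise x0 uinit u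

lemma uext_of_nonneg {j : ℤ} (hj : 0 ≤ j) : uext uinit u j = u j.toNat :=
  funext fun _ => if_pos hj

lemma uext_of_neg {j : ℤ} (hj : j < 0) : uext uinit u j = fun _ => uinit j :=
  funext fun _ => if_neg (not_le.2 hj)

lemma uext_integrable [IsFiniteMeasure μ] (hu_int : ∀ k, Integrable (u k) μ) (j : ℤ) :
    Integrable (uext uinit u j) μ := by
  rcases le_or_gt 0 j with hj | hj
  · exact uext_of_nonneg hj ▸ hu_int j.toNat
  · exact uext_of_neg hj ▸ integrable_const (uinit j)

lemma uext_stronglyMeasurable (hF_mono : Monotone F)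
    (hu_adapted : ∀ k, StronglyMeasurable[Fm1 F k] (u k)) {j : ℤ} {k : ℕ} (hjk : j ≤ k) :
    StronglyMeasurable[Fm1 F k] (uext uinit u j) := by
  rcases le_or_gt 0 j with hj | hj
  · exact uext_of_nonneg hj ▸ (hu_adapted j.toNat).mono (Fm1_mono hF_mono (by omega))
  · exact uext_of_neg hj ▸ stronglyMeasurable_const

lemma traj_succ_eq (k : ℕ) :
    𝐱 (k + 1) = (fun w => A *ᵥ 𝐱 k w) + (fun w => B *ᵥ uext uinit u (k - d) w)
      + noise k • fun w => Abar *ᵥ 𝐱 k w + Bbar *ᵥ uext uinit u (k - d) w := by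
  funext w
  simp only [traj, Pi.add_apply, Pi.smul_apply', add_mulVec, smul_mulVec, smul_add]
  abel

lemma traj_stronglyMeasurable (hF_mono : Monotone F)
    (hnoise_meas : ∀ k, Measurable[F k] (noise k))
    (hu_adapted : ∀ k, StronglyMeasurable[Fm1 F k] (u k)) :
    ∀ k, StronglyMeasurable[Fm1 F k] (𝐱 k)
  | 0 => stronglyMeasurable_const
  | k + 1 => by
    have hx : Measurable[F k] (𝐱 k) :=
      ((traj_stronglyMeasurable hF_mono hnoise_meas hu_adapted k).mono
        (Fm1_mono hF_mono k.le_succ)).measurable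
    have hv : Measurable[F k] (uext uinit u (k - d)) :=
      (uext_stronglyMeasurable (k := k + 1) hF_mono hu_adapted (by omega)).measurable
    have hnoise := hnoise_meas k
    rw [traj_succ_eq]
    exact Measurable.stronglyMeasurable (by fun_prop)

lemma noiseGain_stronglyMeasurable (hF_mono : Monotone F)
    (hnoise_meas : ∀ k, Measurable[F k] (noise k))
    (hu_adapted : ∀ k, StronglyMeasurable[Fm1 F k] (u k)) (k : ℕ) :
    StronglyMeasurable[Fm1 F k] fun w => Abar *ᵥ 𝐱 k w + Bbar *ᵥ uext uinit u (k - d) w := by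
  have hx : Measurable[Fm1 F k] (𝐱 k) :=
    (traj_stronglyMeasurable hF_mono hnoise_meas hu_adapted k).measurable
  have hv : Measurable[Fm1 F k] (uext uinit u (k - d)) :=
    (uext_stronglyMeasurable hF_mono hu_adapted (by omega)).measurable
  exact Measurable.stronglyMeasurable (by fun_prop)

lemma traj_integrable [IsFiniteMeasure μ] (hF_mono : Monotone F)
    (hnoise_meas : ∀ k, Measurable[F k] (noise k)) (hnoise_int : ∀ k, Integrable (noise k) μ)
    (hnoise_indep : ∀ k, Indep (MeasurableSpace.comap (noise k) inferInstance) (Fm1 F k) μ)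
    (hu_adapted : ∀ k, StronglyMeasurable[Fm1 F k] (u k)) (hu_int : ∀ k, Integrable (u k) μ) :
    ∀ k, Integrable (𝐱 k) μ
  | 0 => integrable_const x0
  | k + 1 => by
    have hx := traj_integrable hF_mono hnoise_meas hnoise_int hnoise_indep hu_adapted hu_int k
    have hv := uext_integrable (uinit := uinit) hu_int (k - d)
    rw [traj_succ_eq]
    exact ((hx.const_mulVec A).add (hv.const_mulVec B)).add
      (integrable_smul_of_indep (E := Fin n → ℝ) (hnoise_indep k) (hnoise_int k)
        (noiseGain_stronglyMeasurable hF_mono hnoise_meas hu_adapted k)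
        ((hx.const_mulVec Abar).add (hv.const_mulVec Bbar)))

lemma condExp_traj_succ [IsProbabilityMeasure μ] (hF_mono : Monotone F) (hF_le : ∀ k, F k ≤ mΩ)
    (hnoise_meas : ∀ k, Measurable[F k] (noise k)) (hnoise_int : ∀ k, Integrable (noise k) μ)
    (hnoise_indep : ∀ k, Indep (MeasurableSpace.comap (noise k) inferInstance) (Fm1 F k) μ)
    (hnoise_mean : ∀ k, ∫ w, noise k w ∂μ = 0)
    (hu_adapted : ∀ k, StronglyMeasurable[Fm1 F k] (u k)) (hu_int : ∀ k, Integrable (u k) μ)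
    {k m : ℕ} (hkm : k ≤ m) (hmk : m ≤ k + d) :
    μ[𝐱 (m + 1) | Fm1 F k] =ᵐ[μ]
      fun w => A *ᵥ μ[𝐱 m | Fm1 F k] w + B *ᵥ uext uinit u (m - d) w := by
  have hx : Integrable (𝐱 m) μ :=
    traj_integrable hF_mono hnoise_meas hnoise_int hnoise_indep hu_adapted hu_int m
  have hv := uext_integrable (uinit := uinit) hu_int (m - d)
  have hv_meas : StronglyMeasurable[Fm1 F k] (uext uinit u (m - d)) :=
    uext_stronglyMeasurable hF_mono hu_adapted (by omega)
  have hAx : μ[fun w => A *ᵥ 𝐱 m w | Fm1 F k] =ᵐ[μ] fun w => A *ᵥ μ[𝐱 m | Fm1 F k] w :=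
    (A.mulVecCLM.comp_condExp_comm hx).symm
  have hBv : μ[fun w => B *ᵥ uext uinit u (m - d) w | Fm1 F k]
      = fun w => B *ᵥ uext uinit u (m - d) w :=
    condExp_of_stronglyMeasurable (Fm1_le hF_le k)
      (B.mulVecCLM.continuous.comp_stronglyMeasurable hv_meas) (hv.const_mulVec B)
  have hgain_meas : StronglyMeasurable[Fm1 F m]
      fun w => Abar *ᵥ 𝐱 m w + Bbar *ᵥ uext uinit u (m - d) w :=
    noiseGain_stronglyMeasurable hF_mono hnoise_meas hu_adapted m
  have hgain := (hx.const_mulVec Abar).add (hv.const_mulVec Bbar)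
  have hnoise : μ[noise m • fun w => Abar *ᵥ 𝐱 m w + Bbar *ᵥ uext uinit u (m - d) w | Fm1 F k]
      =ᵐ[μ] 0 :=
    condExp_smul_ae_eq_zero_of_indep (Fm1_mono hF_mono hkm) (Fm1_le hF_le m)
      ((hnoise_meas m).mono (hF_le m) le_rfl) (hnoise_indep m) (hnoise_int m) (hnoise_mean m)
      hgain_meas hgain
  have hA := hx.const_mulVec A
  have hB := hv.const_mulVec B
  rw [traj_succ_eq]
  filter_upwards [condExp_add (hA.add hB)
      (integrable_smul_of_indep (hnoise_indep m) (hnoise_int m) hgain_meas hgain) (Fm1 F k),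
    condExp_add hA hB (Fm1 F k), hAx, hnoise] with w h_add h_add' hAw hnoise_w
  simp only [h_add, Pi.add_apply, h_add', hAw, hBv, hnoise_w, Pi.zero_apply, add_zero]

lemma condExp_traj_add [IsProbabilityMeasure μ] (hF_mono : Monotone F) (hF_le : ∀ k, F k ≤ mΩ)
    (hnoise_meas : ∀ k, Measurable[F k] (noise k)) (hnoise_int : ∀ k, Integrable (noise k) μ)
    (hnoise_indep : ∀ k, Indep (MeasurableSpace.comap (noise k) inferInstance) (Fm1 F k) μ)
    (hnoise_mean : ∀ k, ∫ w, noise k w ∂μ = 0)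
    (hu_adapted : ∀ k, StronglyMeasurable[Fm1 F k] (u k)) (hu_int : ∀ k, Integrable (u k) μ)
    (k : ℕ) : ∀ i ≤ d + 1, μ[𝐱 (k + i) | Fm1 F k] =ᵐ[μ] fun w => (A ^ i) *ᵥ 𝐱 k w
      + ∑ j ∈ Finset.range i, (A ^ j) *ᵥ B *ᵥ uext uinit u ((k + i : ℕ) - d - (j + 1)) w
  | 0, _ => by
    rw [add_zero, condExp_of_stronglyMeasurable (Fm1_le hF_le k)
      (traj_stronglyMeasurable hF_mono hnoise_meas hu_adapted k)
      (traj_integrable hF_mono hnoise_meas hnoise_int hnoise_indep hu_adapted hu_int k)]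
    simp
  | i + 1, hi => by
    filter_upwards [condExp_traj_succ hF_mono hF_le hnoise_meas hnoise_int hnoise_indep hnoise_mean
        hu_adapted hu_int (d := d) (k := k) (m := k + i) (by omega) (by omega),
      condExp_traj_add hF_mono hF_le hnoise_meas hnoise_int hnoise_indep hnoise_mean
        hu_adapted hu_int k i (by omega)] with w hstep hprev
    rw [← add_assoc, hstep, hprev, Finset.sum_range_succ', mulVec_add, mulVec_sum, pow_succ',
      ← mulVec_mulVec]
    simp only [pow_succ', ← mulVec_mulVec, pow_zero, one_mulVec]
    push_cast
    ring_nf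

end ControlledSystem

theorem stmt4_general {Ω : Type*} [MeasurableSpace Ω] (μ : Measure Ω) [IsProbabilityMeasure μ]
    (F : ℕ → MeasurableSpace Ω) (hF_mono : Monotone F)
    (hF_le : ∀ k, F k ≤ ‹MeasurableSpace Ω›)
    (noise : ℕ → Ω → ℝ)
    (hnoise_meas : ∀ k, Measurable[F k] (noise k))
    (hnoise_int : ∀ k, Integrable (noise k) μ)
    (hnoise_indep : ∀ k, Indep (MeasurableSpace.comap (noise k) inferInstance) (Fm1 F k) μ)
    (hnoise_mean : ∀ k, ∫ w, noise k w ∂μ = 0)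
    (n mu d : ℕ)
    (A Abar : Matrix (Fin n) (Fin n) ℝ) (B Bbar : Matrix (Fin n) (Fin mu) ℝ)
    (x0 : Fin n → ℝ) (uinit : ℤ → Fin mu → ℝ)
    -- the adapted, integrable control
    (u : ℕ → Ω → Fin mu → ℝ)
    (hu_adapted : ∀ k, StronglyMeasurable[Fm1 F k] (u k))
    (hu_int : ∀ k, Integrable (u k) μ) :
    ∀ k : ℕ,
      μ[traj d A Abar B Bbar noise x0 uinit u (k + d) | Fm1 F k] =ᵐ[μ]
        fun w => (A ^ d).mulVec (traj d A Abar B Bbar noise x0 uinit u k w)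
          + ∑ i ∈ Finset.Icc 1 d,
              (A ^ (i - 1)).mulVec (B.mulVec (uext uinit u ((k : ℤ) - (i : ℤ)) w)) := by
  intro k
  filter_upwards [condExp_traj_add hF_mono hF_le hnoise_meas hnoise_int hnoise_indep hnoise_mean
    hu_adapted hu_int k d d.le_succ] with w hw
  rw [hw, ← Finset.Ico_add_one_right_eq_Icc, Finset.sum_Ico_eq_sum_range, Nat.add_sub_cancel]
  congr 1
  refine Finset.sum_congr rfl fun j _ => ?_
  rw [add_tsub_cancel_left]
  push_cast
  ring_nf

/-- For every `k ≥ 0`, assuming each `x_j` is integrable, the conditional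
expectation of the state `d` steps ahead satisfies, almost surely,
`E[x_{k+d} | F_{k−1}] = A^d x_k + ∑_{i=1}^d A^{i−1} B u_{k−i}`, where for negative indices
`u_{k−i}` is the corresponding deterministic initial control. -/
theorem stmt4 {Ω : Type*} [MeasurableSpace Ω] (μ : Measure Ω) [IsProbabilityMeasure μ]
    (F : ℕ → MeasurableSpace Ω) (hF_mono : Monotone F)
    (hF_le : ∀ k, F k ≤ ‹MeasurableSpace Ω›)
    (noise : ℕ → Ω → ℝ)
    (hnoise_meas : ∀ k, Measurable[F k] (noise k))
    (hnoise_int : ∀ k, Integrable (noise k) μ)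
    (hnoise_indep : ∀ k, Indep (MeasurableSpace.comap (noise k) inferInstance) (Fm1 F k) μ)
    (hnoise_mean : ∀ k, ∫ w, noise k w ∂μ = 0)
    (n mu d : ℕ) (hn : 0 < n) (hmu : 0 < mu) (hd : 1 ≤ d)
    (A Abar : Matrix (Fin n) (Fin n) ℝ) (B Bbar : Matrix (Fin n) (Fin mu) ℝ)
    (x0 : Fin n → ℝ) (uinit : ℤ → Fin mu → ℝ)
    -- the adapted, integrable control
    (u : ℕ → Ω → Fin mu → ℝ)
    (hu_adapted : ∀ k, StronglyMeasurable[Fm1 F k] (u k))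
    (hu_int : ∀ k, Integrable (u k) μ)
    -- integrability of the state
    (hx_int : ∀ j, Integrable (traj d A Abar B Bbar noise x0 uinit u j) μ) :
    ∀ k : ℕ,
      μ[traj d A Abar B Bbar noise x0 uinit u (k + d) | Fm1 F k] =ᵐ[μ]
        fun w => (A ^ d).mulVec (traj d A Abar B Bbar noise x0 uinit u k w)
          + ∑ i ∈ Finset.Icc 1 d,
              (A ^ (i - 1)).mulVec (B.mulVec (uext uinit u ((k : ℤ) - (i : ℤ)) w)) :=
  stmt4_general μ F hF_mono hF_le noise hnoise_meas hnoise_int hnoise_indep hnoise_mean n mu d A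
    Abar B Bbar x0 uinit u hu_adapted hu_int

end
end

section
/- For every λ ∈ ℝ^m with λ ≥ 0 componentwise, the Riccati-ZXL backward recursion is well defined for all k = N, N−1, …, d: at each such step, Υ_k(λ) is symmetric positive definite (hence invertible), and Z_k(λ) and X_k(λ) are symmetric positive semidefinite. -/
/-!
The block matrix `[[Aᵀ Z A + σ² Āᵀ X Ā + Q, M_kᵀ], [M_k, Υ_k]]` built from `Z = Z_{k+1}`,
`X = X_{k+1}` equals `[A B]ᵀ Z [A B] + σ² [Ā B̄]ᵀ X [Ā B̄] + diag(Q(λ), R(λ))`, so it is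
positive semidefinite as soon as `Z_{k+1}` and `X_{k+1}` are. Its corner `Υ_k ≥ R(λ)` is then
positive definite, and `Z_k` is the Schur complement of `Υ_k` in it, hence positive semidefinite.
Each `L_j = M_jᵀ Υ_j⁻¹ M_j` is positive semidefinite, and so is `X_k`, which adds the congruent
matrices `(Aᵀ)^i L_{k+i} A^i` to `Z_k`. Backward induction from `Z_{N+1} = X_{N+1} = F(λ)`
concludes.
-/

open Matrix

noncomputable section

/-- `Υ_k = Bᵀ Z_{k+1} B + σ² B̄ᵀ X_{k+1} B̄ + R(λ)`. -/
def Upsf {n mu : ℕ} (σ : ℝ) (B Bbar : Matrix (Fin n) (Fin mu) ℝ)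
    (Rlam : Matrix (Fin mu) (Fin mu) ℝ) (Z X : ℕ → Matrix (Fin n) (Fin n) ℝ) (k : ℕ) :
    Matrix (Fin mu) (Fin mu) ℝ :=
  Bᵀ * Z (k + 1) * B + σ ^ 2 • (Bbarᵀ * X (k + 1) * Bbar) + Rlam

/-- `M_k = Bᵀ Z_{k+1} A + σ² B̄ᵀ X_{k+1} Ā`. -/
def Mf {n mu : ℕ} (σ : ℝ) (A Abar : Matrix (Fin n) (Fin n) ℝ)
    (B Bbar : Matrix (Fin n) (Fin mu) ℝ) (Z X : ℕ → Matrix (Fin n) (Fin n) ℝ) (k : ℕ) :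
    Matrix (Fin mu) (Fin n) ℝ :=
  Bᵀ * Z (k + 1) * A + σ ^ 2 • (Bbarᵀ * X (k + 1) * Abar)

/-- `L_k = M_kᵀ Υ_k⁻¹ M_k` for `k ≤ N` and `L_k = 0` for `k > N`. -/
def Lf {n mu : ℕ} (N : ℕ) (σ : ℝ) (A Abar : Matrix (Fin n) (Fin n) ℝ)
    (B Bbar : Matrix (Fin n) (Fin mu) ℝ) (Rlam : Matrix (Fin mu) (Fin mu) ℝ)
    (Z X : ℕ → Matrix (Fin n) (Fin n) ℝ) (k : ℕ) : Matrix (Fin n) (Fin n) ℝ :=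
  if k ≤ N then
    (Mf σ A Abar B Bbar Z X k)ᵀ * (Upsf σ B Bbar Rlam Z X k)⁻¹ * Mf σ A Abar B Bbar Z X k
  else 0

/-- The Riccati-ZXL backward recursion with horizon `N`, delay `d` and terminal value
`Z_{N+1} = X_{N+1} = Flam`:  for `k = N, …, d`,
`Z_k = Aᵀ Z_{k+1} A + σ² Āᵀ X_{k+1} Ā + Q(λ) − L_k` and
`X_k = Z_k + ∑_{i=0}^{d−1} (Aᵀ)^i L_{k+i} A^i`. -/
def RiccatiZXL {n mu : ℕ} (d N : ℕ) (σ : ℝ) (A Abar : Matrix (Fin n) (Fin n) ℝ)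
    (B Bbar : Matrix (Fin n) (Fin mu) ℝ) (Qlam : Matrix (Fin n) (Fin n) ℝ)
    (Rlam : Matrix (Fin mu) (Fin mu) ℝ) (Flam : Matrix (Fin n) (Fin n) ℝ)
    (Z X : ℕ → Matrix (Fin n) (Fin n) ℝ) : Prop :=
  Z (N + 1) = Flam ∧ X (N + 1) = Flam ∧
    ∀ k, d ≤ k → k ≤ N →
      Z k = Aᵀ * Z (k + 1) * A + σ ^ 2 • (Abarᵀ * X (k + 1) * Abar) + Qlam
              - Lf N σ A Abar B Bbar Rlam Z X k ∧
      X k = Z k + ∑ i ∈ Finset.range d, (Aᵀ) ^ i * Lf N σ A Abar B Bbar Rlam Z X (k + i) * A ^ i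

theorem posDef_add_sum_smul {n ι : Type*} [Fintype ι] {P₀ : Matrix n n ℝ} (h₀ : P₀.PosDef)
    {P : ι → Matrix n n ℝ} (hP : ∀ i, (P i).PosSemidef) {c : ι → ℝ} (hc : ∀ i, 0 ≤ c i) :
    (P₀ + ∑ i, c i • P i).PosDef :=
  h₀.add_posSemidef <| posSemidef_sum _ fun i _ ↦ (hP i).smul (hc i)

section Congruence

variable {m n : Type*} [Fintype m] [Fintype n]

theorem Matrix.PosSemidef.transpose_mul_mul_same {Z : Matrix m m ℝ} (hZ : Z.PosSemidef)
    (B : Matrix m n ℝ) : (Bᵀ * Z * B).PosSemidef := by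
  simpa using hZ.conjTranspose_mul_mul_same B

theorem posDef_transpose_mul_mul_add {Z X : Matrix m m ℝ} (hZ : Z.PosSemidef) (hX : X.PosSemidef)
    {R : Matrix n n ℝ} (hR : R.PosDef) (σ : ℝ) (B Bbar : Matrix m n ℝ) :
    (Bᵀ * Z * B + σ ^ 2 • (Bbarᵀ * X * Bbar) + R).PosDef :=
  PosDef.posSemidef_add ((hZ.transpose_mul_mul_same B).add
    ((hX.transpose_mul_mul_same Bbar).smul (sq_nonneg σ))) hR

end Congruence

section Schur

variable {m n : Type*} [Fintype m] [Fintype n] [DecidableEq n]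

theorem posSemidef_fromBlocks_diagonal {Q : Matrix m m ℝ} {R : Matrix n n ℝ}
    (hQ : Q.PosSemidef) (hR : R.PosDef) : (fromBlocks Q 0 0 R).PosSemidef := by
  have := hR.isUnit.invertible
  simpa using (PosDef.fromBlocks₂₂ Q 0 hR).mpr (by simpa using hQ)

omit [Fintype n] [DecidableEq n] in
theorem transpose_fromCols_mul_mul_fromCols (Z A : Matrix m m ℝ) (B : Matrix m n ℝ) :
    (fromCols A B)ᵀ * Z * fromCols A B =
      fromBlocks (Aᵀ * Z * A) (Aᵀ * Z * B) (Bᵀ * Z * A) (Bᵀ * Z * B) := by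
  rw [transpose_fromCols, fromRows_mul, fromRows_mul_fromCols]

variable (σ : ℝ) (A Abar : Matrix m m ℝ) (B Bbar : Matrix m n ℝ) {Z X Q : Matrix m m ℝ}
  {R : Matrix n n ℝ}

theorem posSemidef_fromBlocks_riccati (hZ : Z.PosSemidef) (hX : X.PosSemidef)
    (hQ : Q.PosSemidef) (hR : R.PosDef) :
    (fromBlocks (Aᵀ * Z * A + σ ^ 2 • (Abarᵀ * X * Abar) + Q)
      (Bᵀ * Z * A + σ ^ 2 • (Bbarᵀ * X * Abar))ᵀ
      (Bᵀ * Z * A + σ ^ 2 • (Bbarᵀ * X * Abar))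
      (Bᵀ * Z * B + σ ^ 2 • (Bbarᵀ * X * Bbar) + R)).PosSemidef := by
  have hZt : Zᵀ = Z := by simpa using hZ.1.eq
  have hXt : Xᵀ = X := by simpa using hX.1.eq
  convert ((hZ.transpose_mul_mul_same (fromCols A B)).add
    ((hX.transpose_mul_mul_same (fromCols Abar Bbar)).smul (sq_nonneg σ))).add
    (posSemidef_fromBlocks_diagonal hQ hR) using 1
  rw [transpose_fromCols_mul_mul_fromCols, transpose_fromCols_mul_mul_fromCols, fromBlocks_smul,
    fromBlocks_add, fromBlocks_add]
  simp only [transpose_add, transpose_smul, transpose_mul, transpose_transpose, hZt, hXt,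
    Matrix.mul_assoc, add_zero]

theorem posSemidef_riccati_sub (hZ : Z.PosSemidef) (hX : X.PosSemidef)
    (hQ : Q.PosSemidef) (hR : R.PosDef) :
    (Aᵀ * Z * A + σ ^ 2 • (Abarᵀ * X * Abar) + Q
      - (Bᵀ * Z * A + σ ^ 2 • (Bbarᵀ * X * Abar))ᵀ
        * (Bᵀ * Z * B + σ ^ 2 • (Bbarᵀ * X * Bbar) + R)⁻¹
        * (Bᵀ * Z * A + σ ^ 2 • (Bbarᵀ * X * Abar))).PosSemidef := by
  have hΥ := posDef_transpose_mul_mul_add hZ hX hR σ B Bbar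
  have := hΥ.isUnit.invertible
  have hSchur := PosDef.fromBlocks₂₂ (Aᵀ * Z * A + σ ^ 2 • (Abarᵀ * X * Abar) + Q)
    (Bᵀ * Z * A + σ ^ 2 • (Bbarᵀ * X * Abar))ᵀ hΥ
  rw [conjTranspose_eq_transpose_of_trivial, transpose_transpose] at hSchur
  exact hSchur.mp (posSemidef_fromBlocks_riccati σ A Abar B Bbar hZ hX hQ hR)

end Schur

section Recursion

variable {n mu : ℕ} {d N k : ℕ} {σ : ℝ} {A Abar : Matrix (Fin n) (Fin n) ℝ}
  {B Bbar : Matrix (Fin n) (Fin mu) ℝ} {Qlam : Matrix (Fin n) (Fin n) ℝ}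
  {Rlam : Matrix (Fin mu) (Fin mu) ℝ} {Flam : Matrix (Fin n) (Fin n) ℝ}
  {Z X : ℕ → Matrix (Fin n) (Fin n) ℝ}

theorem posDef_Upsf (hR : Rlam.PosDef) (hZ : (Z (k + 1)).PosSemidef)
    (hX : (X (k + 1)).PosSemidef) : (Upsf σ B Bbar Rlam Z X k).PosDef :=
  posDef_transpose_mul_mul_add hZ hX hR σ B Bbar

theorem posSemidef_Lf (hR : Rlam.PosDef)
    (h : k ≤ N → (Z (k + 1)).PosSemidef ∧ (X (k + 1)).PosSemidef) :
    (Lf N σ A Abar B Bbar Rlam Z X k).PosSemidef := by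
  unfold Lf
  split_ifs with hk
  · obtain ⟨hZ, hX⟩ := h hk
    exact (posDef_Upsf hR hZ hX).inv.posSemidef.transpose_mul_mul_same _
  · exact .zero

theorem RiccatiZXL.posSemidef_of_forall_lt
    (hZX : RiccatiZXL d N σ A Abar B Bbar Qlam Rlam Flam Z X)
    (hQ : Qlam.PosSemidef) (hR : Rlam.PosDef) (hdk : d ≤ k) (hkN : k ≤ N)
    (ih : ∀ j, k < j → j ≤ N + 1 → (Z j).PosSemidef ∧ (X j).PosSemidef) :
    (Z k).PosSemidef ∧ (X k).PosSemidef := by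
  obtain ⟨hZk, hXk⟩ := hZX.2.2 k hdk hkN
  obtain ⟨hZ, hX⟩ := ih (k + 1) (by omega) (by omega)
  have hZk_psd : (Z k).PosSemidef := by
    rw [hZk, Lf, if_pos hkN]
    exact posSemidef_riccati_sub σ A Abar B Bbar hZ hX hQ hR
  refine ⟨hZk_psd, hXk ▸ hZk_psd.add (posSemidef_sum _ fun i _ ↦ ?_)⟩
  have hL : (Lf N σ A Abar B Bbar Rlam Z X (k + i)).PosSemidef :=
    posSemidef_Lf hR fun h ↦ ih (k + i + 1) (by omega) (by omega)
  rw [← transpose_pow]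
  exact hL.transpose_mul_mul_same _

theorem RiccatiZXL.posSemidef (hZX : RiccatiZXL d N σ A Abar B Bbar Qlam Rlam Flam Z X)
    (hQ : Qlam.PosSemidef) (hR : Rlam.PosDef) (hF : Flam.PosSemidef) :
    ∀ k, d ≤ k → k ≤ N + 1 → (Z k).PosSemidef ∧ (X k).PosSemidef := by
  intro k
  induction k using Nat.strong_decreasing_induction with
  | base => exact ⟨N + 1, fun j hj _ hjN ↦ absurd hjN (by omega)⟩
  | step k ih =>
    intro hdk hk
    rcases hk.eq_or_lt with rfl | hk
    · rw [hZX.1, hZX.2.1]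
      exact ⟨hF, hF⟩
    · exact hZX.posSemidef_of_forall_lt hQ hR hdk (by omega)
        fun j hkj hjN ↦ ih j hkj (by omega) hjN

end Recursion

theorem stmt7_general {n mu m : ℕ} (d N : ℕ)
    (σ : ℝ)
    (A Abar : Matrix (Fin n) (Fin n) ℝ) (B Bbar : Matrix (Fin n) (Fin mu) ℝ)
    (Q : Fin (m + 1) → Matrix (Fin n) (Fin n) ℝ)
    (R : Fin (m + 1) → Matrix (Fin mu) (Fin mu) ℝ)
    (F : Fin (m + 1) → Matrix (Fin n) (Fin n) ℝ)
    (hQ : ∀ i, (Q i).PosDef) (hR : ∀ i, (R i).PosDef) (hF : ∀ i, (F i).PosDef)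
    (lam : Fin m → ℝ) (hlam : ∀ i, 0 ≤ lam i)
    (Z X : ℕ → Matrix (Fin n) (Fin n) ℝ)
    (hZX : RiccatiZXL d N σ A Abar B Bbar
      (Q 0 + ∑ i : Fin m, lam i • Q i.succ) (R 0 + ∑ i : Fin m, lam i • R i.succ)
      (F 0 + ∑ i : Fin m, lam i • F i.succ) Z X) :
    ∀ k, d ≤ k → k ≤ N →
      (Upsf σ B Bbar (R 0 + ∑ i : Fin m, lam i • R i.succ) Z X k).PosDef ∧
      IsUnit (Upsf σ B Bbar (R 0 + ∑ i : Fin m, lam i • R i.succ) Z X k) ∧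
      (Z k).PosSemidef ∧ (X k).PosSemidef := by
  intro k hdk hkN
  have hQlam := posDef_add_sum_smul (hQ 0) (fun i ↦ (hQ i.succ).posSemidef) hlam
  have hRlam := posDef_add_sum_smul (hR 0) (fun i ↦ (hR i.succ).posSemidef) hlam
  have hFlam := posDef_add_sum_smul (hF 0) (fun i ↦ (hF i.succ).posSemidef) hlam
  have hZX_psd := hZX.posSemidef hQlam.posSemidef hRlam hFlam.posSemidef
  obtain ⟨hZ, hX⟩ := hZX_psd (k + 1) (by omega) (by omega)
  have hΥ : (Upsf σ B Bbar _ Z X k).PosDef := posDef_Upsf hRlam hZ hX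
  exact ⟨hΥ, hΥ.isUnit, hZX_psd k hdk (by omega)⟩

/-- With symmetric positive definite `Q i, R i, F i` (`i = 0,…,m`) and
`Q(λ) = Q 0 + ∑ λ i • Q (i+1)` etc., for every `λ ≥ 0` componentwise the Riccati-ZXL
backward recursion is well defined for all `k = N, …, d`: at each such step `Υ_k(λ)` is
symmetric positive definite (hence invertible), and `Z_k(λ)`, `X_k(λ)` are symmetric
positive semidefinite. -/
theorem stmt7 {n mu m : ℕ} (hn : 0 < n) (hmu : 0 < mu) (d N : ℕ) (hd : 1 ≤ d) (hN : d ≤ N)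
    (σ : ℝ) (hσ : 0 < σ)
    (A Abar : Matrix (Fin n) (Fin n) ℝ) (B Bbar : Matrix (Fin n) (Fin mu) ℝ)
    (Q : Fin (m + 1) → Matrix (Fin n) (Fin n) ℝ)
    (R : Fin (m + 1) → Matrix (Fin mu) (Fin mu) ℝ)
    (F : Fin (m + 1) → Matrix (Fin n) (Fin n) ℝ)
    (hQ : ∀ i, (Q i).PosDef) (hR : ∀ i, (R i).PosDef) (hF : ∀ i, (F i).PosDef)
    (lam : Fin m → ℝ) (hlam : ∀ i, 0 ≤ lam i)
    (Z X : ℕ → Matrix (Fin n) (Fin n) ℝ)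
    (hZX : RiccatiZXL d N σ A Abar B Bbar
      (Q 0 + ∑ i : Fin m, lam i • Q i.succ) (R 0 + ∑ i : Fin m, lam i • R i.succ)
      (F 0 + ∑ i : Fin m, lam i • F i.succ) Z X) :
    ∀ k, d ≤ k → k ≤ N →
      (Upsf σ B Bbar (R 0 + ∑ i : Fin m, lam i • R i.succ) Z X k).PosDef ∧
      IsUnit (Upsf σ B Bbar (R 0 + ∑ i : Fin m, lam i • R i.succ) Z X k) ∧
      (Z k).PosSemidef ∧ (X k).PosSemidef :=
  stmt7_general d N σ A Abar B Bbar Q R F hQ hR hF lam hlam Z X hZX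

end
end

section
/- On any open subset of ℝ^m containing the nonnegative orthant on which every Υ_j(λ) (j = d,…,N) is invertible, the maps λ ↦ Z_k(λ) and λ ↦ X_k(λ) are differentiable in each variable λ_i (i = 1,…,m) for every k = d,…,N+1, and the partial derivatives satisfy the backward recursion: ∇_{λ_i} Z_{N+1} = ∇_{λ_i} X_{N+1} = F_i, and for k = N,…,d: ∇_{λ_i} M_k = Bᵀ ∇_{λ_i} Z_{k+1} A + σ² B̄ᵀ ∇_{λ_i} X_{k+1} Ā, ∇_{λ_i} Υ_k = Bᵀ ∇_{λ_i} Z_{k+1} B + σ² B̄ᵀ ∇_{λ_i} X_{k+1} B̄ + R_i, ∇_{λ_i} L_k = (∇_{λ_i} M_k)ᵀ Υ_k⁻¹ M_k − M_kᵀ Υ_k⁻¹ (∇_{λ_i} Υ_k) Υ_k⁻¹ M_k + M_kᵀ Υ_k⁻¹ ∇_{λ_i} M_k (with ∇_{λ_i} L_j = 0 for j > N), ∇_{λ_i} Z_k = Aᵀ ∇_{λ_i} Z_{k+1} A + σ² Āᵀ ∇_{λ_i} X_{k+1} Ā + Q_i − ∇_{λ_i} L_k, and ∇_{λ_i} X_k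 = ∇_{λ_i} Z_k + Σ_{j=0}^{d−1} (Aᵀ)^j ∇_{λ_i} L_{k+j} A^j. -/
/-!
Fix a coordinate `i` and move `λ` along the line `t ↦ update λ i t`. Every quantity of the
recursion is obtained from `Z_{k+1}`, `X_{k+1}` and the affine data `Q(λ)`, `R(λ)`, `F(λ)` by
sums, products, transposes and the inverse of `Υ_k`, and all of these operations are
entrywise differentiable; for the inverse this follows from
`U(t)⁻¹ - U(x)⁻¹ = -U(t)⁻¹ (U(t) - U(x)) U(x)⁻¹` and continuity of `U ↦ U⁻¹` at an invertible
matrix. Since `O` is open, the Riccati recursion holds on a neighbourhood of `λ_i`, so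
downward induction from `k = N + 1` shows that every `Z_k`, `X_k` is differentiable. Taking the
partial derivatives to be the entrywise derivatives, the recursion they satisfy is the
derivative of the Riccati recursion, by uniqueness of derivatives.
-/

open Matrix

noncomputable section

/-- `Q(λ) = Q 0 + ∑ i, λ i • Q (i+1)` (and likewise for `R`, `F`). -/
def lamMix {m p q : ℕ} (M : Fin (m + 1) → Matrix (Fin p) (Fin q) ℝ) (lam : Fin m → ℝ) :
    Matrix (Fin p) (Fin q) ℝ :=
  M 0 + ∑ i : Fin m, lam i • M i.succ

/-- `∇_{λ_i} M_k = Bᵀ ∇Z_{k+1} A + σ² B̄ᵀ ∇X_{k+1} Ā`. -/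
def DMf {n mu : ℕ} (σ : ℝ) (A Abar : Matrix (Fin n) (Fin n) ℝ)
    (B Bbar : Matrix (Fin n) (Fin mu) ℝ) (DZ DX : ℕ → Matrix (Fin n) (Fin n) ℝ) (k : ℕ) :
    Matrix (Fin mu) (Fin n) ℝ :=
  Bᵀ * DZ (k + 1) * A + σ ^ 2 • (Bbarᵀ * DX (k + 1) * Abar)

/-- `∇_{λ_i} Υ_k = Bᵀ ∇Z_{k+1} B + σ² B̄ᵀ ∇X_{k+1} B̄ + R_i`. -/
def DUpsf {n mu : ℕ} (σ : ℝ) (B Bbar : Matrix (Fin n) (Fin mu) ℝ)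
    (Ri : Matrix (Fin mu) (Fin mu) ℝ) (DZ DX : ℕ → Matrix (Fin n) (Fin n) ℝ) (k : ℕ) :
    Matrix (Fin mu) (Fin mu) ℝ :=
  Bᵀ * DZ (k + 1) * B + σ ^ 2 • (Bbarᵀ * DX (k + 1) * Bbar) + Ri

/-- `∇_{λ_i} L_k = (∇M_k)ᵀ Υ_k⁻¹ M_k − M_kᵀ Υ_k⁻¹ (∇Υ_k) Υ_k⁻¹ M_k + M_kᵀ Υ_k⁻¹ ∇M_k`
for `k ≤ N`, and `0` for `k > N`. -/
def DLf {n mu : ℕ} (N : ℕ) (σ : ℝ) (A Abar : Matrix (Fin n) (Fin n) ℝ)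
    (B Bbar : Matrix (Fin n) (Fin mu) ℝ) (Rlam Ri : Matrix (Fin mu) (Fin mu) ℝ)
    (Z X DZ DX : ℕ → Matrix (Fin n) (Fin n) ℝ) (k : ℕ) : Matrix (Fin n) (Fin n) ℝ :=
  if k ≤ N then
    (DMf σ A Abar B Bbar DZ DX k)ᵀ * (Upsf σ B Bbar Rlam Z X k)⁻¹ * Mf σ A Abar B Bbar Z X k
      - (Mf σ A Abar B Bbar Z X k)ᵀ * (Upsf σ B Bbar Rlam Z X k)⁻¹
          * DUpsf σ B Bbar Ri DZ DX k * (Upsf σ B Bbar Rlam Z X k)⁻¹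
          * Mf σ A Abar B Bbar Z X k
      + (Mf σ A Abar B Bbar Z X k)ᵀ * (Upsf σ B Bbar Rlam Z X k)⁻¹
          * DMf σ A Abar B Bbar DZ DX k
  else 0

open Filter Topology

section EntrywiseDeriv

variable {ι κ ν : Type*} {x : ℝ}

def HasEntrywiseDerivAt (f : ℝ → Matrix ι κ ℝ) (f' : Matrix ι κ ℝ) (x : ℝ) : Prop :=
  ∀ a b, HasDerivAt (fun t => f t a b) (f' a b) x

def entrywiseDeriv (f : ℝ → Matrix ι κ ℝ) (x : ℝ) : Matrix ι κ ℝ :=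
  Matrix.of fun a b => deriv (fun t => f t a b) x

theorem hasEntrywiseDerivAt_const (c : Matrix ι κ ℝ) : HasEntrywiseDerivAt (fun _ => c) 0 x :=
  fun _ _ => hasDerivAt_const _ _

namespace HasEntrywiseDerivAt

variable {f g : ℝ → Matrix ι κ ℝ} {f' g' : Matrix ι κ ℝ}

theorem entrywiseDeriv_eq (hf : HasEntrywiseDerivAt f f' x) : entrywiseDeriv f x = f' :=
  Matrix.ext fun a b => (hf a b).deriv

theorem hasEntrywiseDerivAt_entrywiseDeriv (hf : HasEntrywiseDerivAt f f' x) :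
    HasEntrywiseDerivAt f (entrywiseDeriv f x) x :=
  hf.entrywiseDeriv_eq ▸ hf

theorem continuousAt (hf : HasEntrywiseDerivAt f f' x) : ContinuousAt f x :=
  continuousAt_pi.2 fun a => continuousAt_pi.2 fun b => (hf a b).continuousAt

theorem congr_of_eventuallyEq (hf : HasEntrywiseDerivAt f f' x) (h : g =ᶠ[𝓝 x] f) :
    HasEntrywiseDerivAt g f' x := fun a b =>
  (hf a b).congr_of_eventuallyEq (h.mono fun _ ht => congrFun (congrFun ht a) b)

theorem add (hf : HasEntrywiseDerivAt f f' x) (hg : HasEntrywiseDerivAt g g' x) :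
    HasEntrywiseDerivAt (fun t => f t + g t) (f' + g') x := fun a b =>
  (hf a b).fun_add (hg a b)

theorem sub (hf : HasEntrywiseDerivAt f f' x) (hg : HasEntrywiseDerivAt g g' x) :
    HasEntrywiseDerivAt (fun t => f t - g t) (f' - g') x := fun a b =>
  (hf a b).fun_sub (hg a b)

theorem const_smul (c : ℝ) (hf : HasEntrywiseDerivAt f f' x) :
    HasEntrywiseDerivAt (fun t => c • f t) (c • f') x := fun a b =>
  (hf a b).const_mul c

theorem transpose (hf : HasEntrywiseDerivAt f f' x) :
    HasEntrywiseDerivAt (fun t => (f t)ᵀ) f'ᵀ x := fun a b => hf b a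

theorem sum {α : Type*} {s : Finset α} {f : α → ℝ → Matrix ι κ ℝ}
    {f' : α → Matrix ι κ ℝ}
    (h : ∀ j ∈ s, HasEntrywiseDerivAt (f j) (f' j) x) :
    HasEntrywiseDerivAt (fun t => ∑ j ∈ s, f j t) (∑ j ∈ s, f' j) x := fun a b => by
  simpa only [Matrix.sum_apply] using HasDerivAt.fun_sum fun j hj => h j hj a b

theorem mul [Fintype κ] {g : ℝ → Matrix κ ν ℝ} {g' : Matrix κ ν ℝ}
    (hf : HasEntrywiseDerivAt f f' x) (hg : HasEntrywiseDerivAt g g' x) :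
    HasEntrywiseDerivAt (fun t => f t * g t) (f' * g x + f x * g') x := fun a b => by
  simpa only [Matrix.mul_apply, Matrix.add_apply, ← Finset.sum_add_distrib] using
    HasDerivAt.fun_sum fun c _ => (hf a c).fun_mul (hg c b)

theorem const_mul [Fintype ι] (C : Matrix ν ι ℝ) (hf : HasEntrywiseDerivAt f f' x) :
    HasEntrywiseDerivAt (fun t => C * f t) (C * f') x := by
  simpa using (hasEntrywiseDerivAt_const C).mul hf

theorem mul_const [Fintype κ] (hf : HasEntrywiseDerivAt f f' x) (C : Matrix κ ν ℝ) :
    HasEntrywiseDerivAt (fun t => f t * C) (f' * C) x := by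
  simpa using hf.mul (hasEntrywiseDerivAt_const C)

end HasEntrywiseDerivAt

theorem hasEntrywiseDerivAt_iff_tendsto_slope {f : ℝ → Matrix ι κ ℝ}
    {f' : Matrix ι κ ℝ} :
    HasEntrywiseDerivAt f f' x ↔ Tendsto (slope f x) (𝓝[≠] x) (𝓝 f') := by
  rw [show Tendsto (slope f x) (𝓝[≠] x) (𝓝 f') ↔ _ from tendsto_pi_nhds]
  simp only [HasEntrywiseDerivAt, hasDerivAt_iff_tendsto_slope, tendsto_pi_nhds]
  rfl

theorem HasEntrywiseDerivAt.inv [Fintype ι] [DecidableEq ι] {U : ℝ → Matrix ι ι ℝ}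
    {U' : Matrix ι ι ℝ} (hU : HasEntrywiseDerivAt U U' x) (hUx : IsUnit (U x)) :
    HasEntrywiseDerivAt (fun t => (U t)⁻¹) (-((U x)⁻¹ * U' * (U x)⁻¹)) x := by
  have hdet : IsUnit (U x).det := (Matrix.isUnit_iff_isUnit_det _).1 hUx
  have hdet_cont : ContinuousAt (fun t => (U t).det) x :=
    (continuous_id.matrix_det.continuousAt).comp hU.continuousAt
  have hinv_cont : ContinuousAt (fun t => (U t)⁻¹) x := by
    refine (continuousAt_matrix_inv _ ?_).comp hU.continuousAt
    rw [Ring.inverse_eq_inv']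
    exact continuousAt_inv₀ hdet.ne_zero
  have hslope : ∀ᶠ t in 𝓝[≠] x,
      -((U t)⁻¹ * slope U x t * (U x)⁻¹) = slope (fun t => (U t)⁻¹) x t := by
    refine eventually_nhdsWithin_of_eventually_nhds
      ((hdet_cont.eventually_ne hdet.ne_zero).mono fun t ht => ?_)
    simp only [slope_def_module, Matrix.mul_smul, Matrix.smul_mul, Matrix.mul_sub, Matrix.sub_mul,
      Matrix.nonsing_inv_mul _ (isUnit_iff_ne_zero.2 ht),
      Matrix.mul_nonsing_inv_cancel_right _ _ hdet, Matrix.one_mul,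
      ← smul_neg, neg_sub]
  rw [hasEntrywiseDerivAt_iff_tendsto_slope] at hU ⊢
  exact ((((hinv_cont.tendsto.mono_left nhdsWithin_le_nhds).mul hU).mul
    tendsto_const_nhds).neg).congr' hslope

theorem HasEntrywiseDerivAt.transpose_mul_inv_mul [Fintype ι] [DecidableEq ι]
    {M : ℝ → Matrix ι κ ℝ} {U : ℝ → Matrix ι ι ℝ} {M' : Matrix ι κ ℝ}
    {U' : Matrix ι ι ℝ} (hM : HasEntrywiseDerivAt M M' x) (hU : HasEntrywiseDerivAt U U' x)
    (hUx : IsUnit (U x)) :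
    HasEntrywiseDerivAt (fun t => (M t)ᵀ * (U t)⁻¹ * M t)
      (M'ᵀ * (U x)⁻¹ * M x - (M x)ᵀ * (U x)⁻¹ * U' * (U x)⁻¹ * M x
        + (M x)ᵀ * (U x)⁻¹ * M') x := by
  convert (hM.transpose.mul (hU.inv hUx)).mul hM using 1
  simp only [Matrix.add_mul, Matrix.neg_mul, Matrix.mul_neg, sub_eq_add_neg, Matrix.mul_assoc]

end EntrywiseDeriv

theorem hasEntrywiseDerivAt_lamMix_update {m p q : ℕ}
    (M : Fin (m + 1) → Matrix (Fin p) (Fin q) ℝ) (lam : Fin m → ℝ) (i : Fin m) (x : ℝ) :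
    HasEntrywiseDerivAt (fun t => lamMix M (Function.update lam i t)) (M i.succ) x := fun a b => by
  simpa [lamMix, Matrix.sum_apply, Pi.single_apply] using
    (hasDerivAt_const x (M 0 a b)).fun_add (HasDerivAt.fun_sum (u := Finset.univ) fun j _ =>
      (hasDerivAt_pi.1 (hasDerivAt_update lam i x) j).mul_const (M j.succ a b))

section Riccati

variable {n mu d N : ℕ} {σ x : ℝ} {A Abar : Matrix (Fin n) (Fin n) ℝ}
  {B Bbar : Matrix (Fin n) (Fin mu) ℝ} {Qt Ft : ℝ → Matrix (Fin n) (Fin n) ℝ}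
  {Rt : ℝ → Matrix (Fin mu) (Fin mu) ℝ} {Q' F' : Matrix (Fin n) (Fin n) ℝ}
  {R' : Matrix (Fin mu) (Fin mu) ℝ} {Zt Xt : ℝ → ℕ → Matrix (Fin n) (Fin n) ℝ}
  {DZ DX : ℕ → Matrix (Fin n) (Fin n) ℝ} {k : ℕ}

theorem hasEntrywiseDerivAt_Mf (hZ : HasEntrywiseDerivAt (Zt · (k + 1)) (DZ (k + 1)) x)
    (hX : HasEntrywiseDerivAt (Xt · (k + 1)) (DX (k + 1)) x) :
    HasEntrywiseDerivAt (fun t => Mf σ A Abar B Bbar (Zt t) (Xt t) k)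
      (DMf σ A Abar B Bbar DZ DX k) x :=
  ((hZ.const_mul Bᵀ).mul_const A).add
    (((hX.const_mul Bbarᵀ).mul_const Abar).const_smul (σ ^ 2))

theorem hasEntrywiseDerivAt_Upsf (hZ : HasEntrywiseDerivAt (Zt · (k + 1)) (DZ (k + 1)) x)
    (hX : HasEntrywiseDerivAt (Xt · (k + 1)) (DX (k + 1)) x) (hR : HasEntrywiseDerivAt Rt R' x) :
    HasEntrywiseDerivAt (fun t => Upsf σ B Bbar (Rt t) (Zt t) (Xt t) k)
      (DUpsf σ B Bbar R' DZ DX k) x :=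
  (((hZ.const_mul Bᵀ).mul_const B).add
    (((hX.const_mul Bbarᵀ).mul_const Bbar).const_smul (σ ^ 2))).add hR

theorem hasEntrywiseDerivAt_Lf (hR : HasEntrywiseDerivAt Rt R' x)
    (hZX : k ≤ N → HasEntrywiseDerivAt (Zt · (k + 1)) (DZ (k + 1)) x ∧
      HasEntrywiseDerivAt (Xt · (k + 1)) (DX (k + 1)) x ∧
      IsUnit (Upsf σ B Bbar (Rt x) (Zt x) (Xt x) k)) :
    HasEntrywiseDerivAt (fun t => Lf N σ A Abar B Bbar (Rt t) (Zt t) (Xt t) k)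
      (DLf N σ A Abar B Bbar (Rt x) R' (Zt x) (Xt x) DZ DX k) x := by
  by_cases hk : k ≤ N
  · obtain ⟨hZ, hX, hunit⟩ := hZX hk
    simp only [Lf, DLf, if_pos hk]
    exact (hasEntrywiseDerivAt_Mf hZ hX).transpose_mul_inv_mul
      (hasEntrywiseDerivAt_Upsf hZ hX hR) hunit
  · simp only [Lf, DLf, if_neg hk]
    exact hasEntrywiseDerivAt_const 0

variable
  (hric : ∀ᶠ t in 𝓝 x, RiccatiZXL d N σ A Abar B Bbar (Qt t) (Rt t) (Ft t) (Zt t) (Xt t))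
include hric

theorem hasEntrywiseDerivAt_riccatiZXL_terminal (hF : HasEntrywiseDerivAt Ft F' x) :
    HasEntrywiseDerivAt (Zt · (N + 1)) F' x ∧ HasEntrywiseDerivAt (Xt · (N + 1)) F' x :=
  ⟨hF.congr_of_eventuallyEq (hric.mono fun _ h => h.1),
    hF.congr_of_eventuallyEq (hric.mono fun _ h => h.2.1)⟩

theorem hasEntrywiseDerivAt_riccatiZXL_Z (hQ : HasEntrywiseDerivAt Qt Q' x)
    (hR : HasEntrywiseDerivAt Rt R' x) (hdk : d ≤ k) (hkN : k ≤ N)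
    (hZ : HasEntrywiseDerivAt (Zt · (k + 1)) (DZ (k + 1)) x)
    (hX : HasEntrywiseDerivAt (Xt · (k + 1)) (DX (k + 1)) x)
    (hunit : IsUnit (Upsf σ B Bbar (Rt x) (Zt x) (Xt x) k)) :
    HasEntrywiseDerivAt (Zt · k)
      (Aᵀ * DZ (k + 1) * A + σ ^ 2 • (Abarᵀ * DX (k + 1) * Abar) + Q'
        - DLf N σ A Abar B Bbar (Rt x) R' (Zt x) (Xt x) DZ DX k) x :=
  (((((hZ.const_mul Aᵀ).mul_const A).add
    (((hX.const_mul Abarᵀ).mul_const Abar).const_smul (σ ^ 2))).add hQ).sub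
    (hasEntrywiseDerivAt_Lf hR fun _ => ⟨hZ, hX, hunit⟩)).congr_of_eventuallyEq
    (hric.mono fun _ h => (h.2.2 k hdk hkN).1)

theorem hasEntrywiseDerivAt_riccatiZXL_X (hR : HasEntrywiseDerivAt Rt R' x)
    (hunit : ∀ k, d ≤ k → k ≤ N → IsUnit (Upsf σ B Bbar (Rt x) (Zt x) (Xt x) k))
    (hdk : d ≤ k) (hkN : k ≤ N)
    (hsucc : ∀ k', k < k' → k' ≤ N + 1 →
      HasEntrywiseDerivAt (Zt · k') (DZ k') x ∧ HasEntrywiseDerivAt (Xt · k') (DX k') x)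
    {DZk : Matrix (Fin n) (Fin n) ℝ} (hZk : HasEntrywiseDerivAt (Zt · k) DZk x) :
    HasEntrywiseDerivAt (Xt · k)
      (DZk + ∑ j ∈ Finset.range d,
        (Aᵀ) ^ j * DLf N σ A Abar B Bbar (Rt x) R' (Zt x) (Xt x) DZ DX (k + j) * A ^ j) x := by
  have hL : ∀ j ∈ Finset.range d, HasEntrywiseDerivAt
      (fun t => (Aᵀ) ^ j * Lf N σ A Abar B Bbar (Rt t) (Zt t) (Xt t) (k + j) * A ^ j)
      ((Aᵀ) ^ j * DLf N σ A Abar B Bbar (Rt x) R' (Zt x) (Xt x) DZ DX (k + j) * A ^ j) x :=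
    fun j _ => ((hasEntrywiseDerivAt_Lf hR fun h =>
      ⟨(hsucc _ (by omega) (by omega)).1, (hsucc _ (by omega) (by omega)).2,
        hunit _ (by omega) h⟩).const_mul _).mul_const _
  exact (hZk.add (HasEntrywiseDerivAt.sum hL)).congr_of_eventuallyEq
    (hric.mono fun _ h => (h.2.2 k hdk hkN).2)

theorem hasEntrywiseDerivAt_riccatiZXL (hQ : HasEntrywiseDerivAt Qt Q' x)
    (hR : HasEntrywiseDerivAt Rt R' x) (hF : HasEntrywiseDerivAt Ft F' x)
    (hunit : ∀ k, d ≤ k → k ≤ N → IsUnit (Upsf σ B Bbar (Rt x) (Zt x) (Xt x) k)) :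
    ∀ k, d ≤ k → k ≤ N + 1 →
      HasEntrywiseDerivAt (Zt · k) (entrywiseDeriv (Zt · k) x) x ∧
        HasEntrywiseDerivAt (Xt · k) (entrywiseDeriv (Xt · k) x) x := by
  intro k hdk hkN
  induction h : N + 1 - k using Nat.strong_induction_on generalizing k with
  | _ j ih =>
    rcases hkN.eq_or_lt with rfl | hlt
    · obtain ⟨hZ, hX⟩ := hasEntrywiseDerivAt_riccatiZXL_terminal hric hF
      exact ⟨hZ.hasEntrywiseDerivAt_entrywiseDeriv, hX.hasEntrywiseDerivAt_entrywiseDeriv⟩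
    have hsucc : ∀ k', k < k' → k' ≤ N + 1 →
        HasEntrywiseDerivAt (Zt · k') (entrywiseDeriv (Zt · k') x) x ∧
          HasEntrywiseDerivAt (Xt · k') (entrywiseDeriv (Xt · k') x) x :=
      fun k' hkk' hk'N => ih _ (by omega) k' (by omega) hk'N rfl
    have hZ := hasEntrywiseDerivAt_riccatiZXL_Z
      (DZ := fun k => entrywiseDeriv (Zt · k) x) (DX := fun k => entrywiseDeriv (Xt · k) x)
      hric hQ hR hdk (by omega) (hsucc _ (by omega) hlt).1 (hsucc _ (by omega) hlt).2
      (hunit k hdk (by omega))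
    exact ⟨hZ.hasEntrywiseDerivAt_entrywiseDeriv,
      (hasEntrywiseDerivAt_riccatiZXL_X hric hR hunit hdk (by omega) hsucc
        hZ).hasEntrywiseDerivAt_entrywiseDeriv⟩

end Riccati

theorem stmt8_general {n mu m : ℕ} (d N : ℕ)
    (σ : ℝ)
    (A Abar : Matrix (Fin n) (Fin n) ℝ) (B Bbar : Matrix (Fin n) (Fin mu) ℝ)
    (Q : Fin (m + 1) → Matrix (Fin n) (Fin n) ℝ)
    (R : Fin (m + 1) → Matrix (Fin mu) (Fin mu) ℝ)
    (F : Fin (m + 1) → Matrix (Fin n) (Fin n) ℝ)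
    (O : Set (Fin m → ℝ)) (hO : IsOpen O)
    (Z X : (Fin m → ℝ) → ℕ → Matrix (Fin n) (Fin n) ℝ)
    (hZX : ∀ lam ∈ O, RiccatiZXL d N σ A Abar B Bbar (lamMix Q lam) (lamMix R lam)
        (lamMix F lam) (Z lam) (X lam))
    (hUps : ∀ lam ∈ O, ∀ k, d ≤ k → k ≤ N →
        IsUnit (Upsf σ B Bbar (lamMix R lam) (Z lam) (X lam) k)) :
    ∃ DZ DX : (Fin m → ℝ) → Fin m → ℕ → Matrix (Fin n) (Fin n) ℝ,
      ∀ lam ∈ O, ∀ i : Fin m,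
        -- differentiability of Z_k and X_k in λ_i, with partial derivatives DZ, DX
        (∀ k, d ≤ k → k ≤ N + 1 → ∀ a b,
          HasDerivAt (fun t : ℝ => Z (Function.update lam i t) k a b)
            (DZ lam i k a b) (lam i) ∧
          HasDerivAt (fun t : ℝ => X (Function.update lam i t) k a b)
            (DX lam i k a b) (lam i)) ∧
        -- terminal values ∇Z_{N+1} = ∇X_{N+1} = F_i
        DZ lam i (N + 1) = F i.succ ∧ DX lam i (N + 1) = F i.succ ∧
        -- the derivative recursion for k = N, …, d
        (∀ k, d ≤ k → k ≤ N →
          (∀ a b, HasDerivAt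
              (fun t : ℝ => Mf σ A Abar B Bbar (Z (Function.update lam i t))
                (X (Function.update lam i t)) k a b)
              (DMf σ A Abar B Bbar (DZ lam i) (DX lam i) k a b) (lam i)) ∧
          (∀ a b, HasDerivAt
              (fun t : ℝ => Upsf σ B Bbar (lamMix R (Function.update lam i t))
                (Z (Function.update lam i t)) (X (Function.update lam i t)) k a b)
              (DUpsf σ B Bbar (R i.succ) (DZ lam i) (DX lam i) k a b) (lam i)) ∧
          (∀ a b, HasDerivAt
              (fun t : ℝ => Lf N σ A Abar B Bbar (lamMix R (Function.update lam i t))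
                (Z (Function.update lam i t)) (X (Function.update lam i t)) k a b)
              (DLf N σ A Abar B Bbar (lamMix R lam) (R i.succ)
                (Z lam) (X lam) (DZ lam i) (DX lam i) k a b) (lam i)) ∧
          DZ lam i k = Aᵀ * DZ lam i (k + 1) * A
              + σ ^ 2 • (Abarᵀ * DX lam i (k + 1) * Abar) + Q i.succ
              - DLf N σ A Abar B Bbar (lamMix R lam) (R i.succ)
                  (Z lam) (X lam) (DZ lam i) (DX lam i) k ∧
          DX lam i k = DZ lam i k + ∑ j ∈ Finset.range d,
              (Aᵀ) ^ j * DLf N σ A Abar B Bbar (lamMix R lam) (R i.succ)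
                (Z lam) (X lam) (DZ lam i) (DX lam i) (k + j) * A ^ j) := by
  refine ⟨fun lam i k => entrywiseDeriv (fun t => Z (Function.update lam i t) k) (lam i),
    fun lam i k => entrywiseDeriv (fun t => X (Function.update lam i t) k) (lam i),
    fun lam hlam i => ?_⟩
  set DZ : ℕ → Matrix (Fin n) (Fin n) ℝ :=
    fun k => entrywiseDeriv (fun t => Z (Function.update lam i t) k) (lam i)
  set DX : ℕ → Matrix (Fin n) (Fin n) ℝ :=
    fun k => entrywiseDeriv (fun t => X (Function.update lam i t) k) (lam i)
  have hnear : ∀ᶠ t in 𝓝 (lam i), Function.update lam i t ∈ O :=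
    (hasDerivAt_update lam i (lam i)).continuousAt.eventually_mem
      (by rw [Function.update_eq_self]; exact hO.mem_nhds hlam)
  have hric := hnear.mono fun t ht => hZX _ ht
  have hunit := Function.update_eq_self i lam ▸ hUps lam hlam
  have hQ := hasEntrywiseDerivAt_lamMix_update Q lam i (lam i)
  have hR := hasEntrywiseDerivAt_lamMix_update R lam i (lam i)
  have hF := hasEntrywiseDerivAt_lamMix_update F lam i (lam i)
  have hdiff := hasEntrywiseDerivAt_riccatiZXL hric hQ hR hF hunit
  have hterm := hasEntrywiseDerivAt_riccatiZXL_terminal hric hF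
  refine ⟨fun k hdk hkN a b => ⟨(hdiff k hdk hkN).1 a b, (hdiff k hdk hkN).2 a b⟩,
    hterm.1.entrywiseDeriv_eq, hterm.2.entrywiseDeriv_eq, fun k hdk hkN => ?_⟩
  have hsucc := fun k' (hkk' : k < k') (hk'N : k' ≤ N + 1) => hdiff k' (by omega) hk'N
  obtain ⟨hZ, hX⟩ := hsucc (k + 1) (by omega) (by omega)
  have hZk := hasEntrywiseDerivAt_riccatiZXL_Z (DZ := DZ) (DX := DX) hric hQ hR hdk hkN hZ hX
    (hunit k hdk hkN)
  have hXk := hasEntrywiseDerivAt_riccatiZXL_X hric hR hunit hdk hkN hsucc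
    (hdiff k hdk (by omega)).1
  have hL := hasEntrywiseDerivAt_Lf (N := N) (A := A) (Abar := Abar) (DZ := DZ) (DX := DX) hR
    fun _ => ⟨hZ, hX, hunit k hdk hkN⟩
  simp only [Function.update_eq_self] at hZk hXk hL
  exact ⟨hasEntrywiseDerivAt_Mf hZ hX, hasEntrywiseDerivAt_Upsf hZ hX hR, hL,
    hZk.entrywiseDeriv_eq, hXk.entrywiseDeriv_eq⟩

/-- On any open `O ⊆ ℝ^m` containing the nonnegative orthant on which every
`Υ_j(λ)` (`j = d,…,N`) is invertible, the maps `λ ↦ Z_k(λ)` and `λ ↦ X_k(λ)` are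
differentiable in each variable `λ_i` for every `k = d,…,N+1`, and the partial derivatives
(together with those of `M_k`, `Υ_k`, `L_k`) satisfy the stated backward recursion. -/
theorem stmt8 {n mu m : ℕ} (hn : 0 < n) (hmu : 0 < mu) (d N : ℕ) (hd : 1 ≤ d) (hN : d ≤ N)
    (σ : ℝ) (hσ : 0 < σ)
    (A Abar : Matrix (Fin n) (Fin n) ℝ) (B Bbar : Matrix (Fin n) (Fin mu) ℝ)
    (Q : Fin (m + 1) → Matrix (Fin n) (Fin n) ℝ)
    (R : Fin (m + 1) → Matrix (Fin mu) (Fin mu) ℝ)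
    (F : Fin (m + 1) → Matrix (Fin n) (Fin n) ℝ)
    (hQ : ∀ i, (Q i).PosDef) (hR : ∀ i, (R i).PosDef) (hF : ∀ i, (F i).PosDef)
    (O : Set (Fin m → ℝ)) (hO : IsOpen O)
    (horth : {lam : Fin m → ℝ | ∀ i, 0 ≤ lam i} ⊆ O)
    (Z X : (Fin m → ℝ) → ℕ → Matrix (Fin n) (Fin n) ℝ)
    (hZX : ∀ lam ∈ O, RiccatiZXL d N σ A Abar B Bbar (lamMix Q lam) (lamMix R lam)
        (lamMix F lam) (Z lam) (X lam))
    (hUps : ∀ lam ∈ O, ∀ k, d ≤ k → k ≤ N →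
        IsUnit (Upsf σ B Bbar (lamMix R lam) (Z lam) (X lam) k)) :
    ∃ DZ DX : (Fin m → ℝ) → Fin m → ℕ → Matrix (Fin n) (Fin n) ℝ,
      ∀ lam ∈ O, ∀ i : Fin m,
        -- differentiability of Z_k and X_k in λ_i, with partial derivatives DZ, DX
        (∀ k, d ≤ k → k ≤ N + 1 → ∀ a b,
          HasDerivAt (fun t : ℝ => Z (Function.update lam i t) k a b)
            (DZ lam i k a b) (lam i) ∧
          HasDerivAt (fun t : ℝ => X (Function.update lam i t) k a b)
            (DX lam i k a b) (lam i)) ∧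
        -- terminal values ∇Z_{N+1} = ∇X_{N+1} = F_i
        DZ lam i (N + 1) = F i.succ ∧ DX lam i (N + 1) = F i.succ ∧
        -- the derivative recursion for k = N, …, d
        (∀ k, d ≤ k → k ≤ N →
          (∀ a b, HasDerivAt
              (fun t : ℝ => Mf σ A Abar B Bbar (Z (Function.update lam i t))
                (X (Function.update lam i t)) k a b)
              (DMf σ A Abar B Bbar (DZ lam i) (DX lam i) k a b) (lam i)) ∧
          (∀ a b, HasDerivAt
              (fun t : ℝ => Upsf σ B Bbar (lamMix R (Function.update lam i t))
                (Z (Function.update lam i t)) (X (Function.update lam i t)) k a b)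
              (DUpsf σ B Bbar (R i.succ) (DZ lam i) (DX lam i) k a b) (lam i)) ∧
          (∀ a b, HasDerivAt
              (fun t : ℝ => Lf N σ A Abar B Bbar (lamMix R (Function.update lam i t))
                (Z (Function.update lam i t)) (X (Function.update lam i t)) k a b)
              (DLf N σ A Abar B Bbar (lamMix R lam) (R i.succ)
                (Z lam) (X lam) (DZ lam i) (DX lam i) k a b) (lam i)) ∧
          DZ lam i k = Aᵀ * DZ lam i (k + 1) * A
              + σ ^ 2 • (Abarᵀ * DX lam i (k + 1) * Abar) + Q i.succ
              - DLf N σ A Abar B Bbar (lamMix R lam) (R i.succ)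
                  (Z lam) (X lam) (DZ lam i) (DX lam i) k ∧
          DX lam i k = DZ lam i k + ∑ j ∈ Finset.range d,
              (Aᵀ) ^ j * DLf N σ A Abar B Bbar (lamMix R lam) (R i.succ)
                (Z lam) (X lam) (DZ lam i) (DX lam i) (k + j) * A ^ j) :=
  stmt8_general d N σ A Abar B Bbar Q R F O hO Z X hZX hUps

end
end

section
/- For every k = d,…,N+1, every i = 1,…,m, and every bounded subset S of the nonnegative orthant {λ ∈ ℝ^m : λ ≥ 0}, the functions λ ↦ Z_k(λ), λ ↦ X_k(λ), and their partial derivatives λ ↦ ∇_{λ_i} Z_k(λ) and λ ↦ ∇_{λ_i} X_k(λ) are bounded on S and Lipschitz continuous on S. -/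
open Matrix

noncomputable section

noncomputable section

section AuxES

variable {m : ℕ} {O : Set (Fin m → ℝ)}

/-- Entrywise smoothness of a matrix-valued function on `O`. -/
def ES {p q : ℕ} (O : Set (Fin m → ℝ)) (M : (Fin m → ℝ) → Matrix (Fin p) (Fin q) ℝ) : Prop :=
  ∀ a b, ContDiffOn ℝ (⊤ : ℕ∞) (fun x => M x a b) O

lemma ES.const {p q : ℕ} (M : Matrix (Fin p) (Fin q) ℝ) : ES O (fun _ => M) :=
  fun _ _ => contDiffOn_const

lemma ES.add {p q : ℕ} {M N : (Fin m → ℝ) → Matrix (Fin p) (Fin q) ℝ}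
    (hM : ES O M) (hN : ES O N) : ES O (fun x => M x + N x) := fun a b => by
  simpa [Matrix.add_apply] using (hM a b).add (hN a b)

lemma ES.sub {p q : ℕ} {M N : (Fin m → ℝ) → Matrix (Fin p) (Fin q) ℝ}
    (hM : ES O M) (hN : ES O N) : ES O (fun x => M x - N x) := fun a b => by
  simpa [Matrix.sub_apply] using (hM a b).sub (hN a b)

lemma ES.smul {p q : ℕ} {M : (Fin m → ℝ) → Matrix (Fin p) (Fin q) ℝ} (c : ℝ)
    (hM : ES O M) : ES O (fun x => c • M x) := fun a b => by
  simpa [Matrix.smul_apply, smul_eq_mul] using (contDiffOn_const (c := c)).mul (hM a b)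

lemma ES.transpose {p q : ℕ} {M : (Fin m → ℝ) → Matrix (Fin p) (Fin q) ℝ}
    (hM : ES O M) : ES O (fun x => (M x)ᵀ) := fun a b => by
  simpa [Matrix.transpose_apply] using hM b a

lemma ES.mul {p q r : ℕ} {M : (Fin m → ℝ) → Matrix (Fin p) (Fin q) ℝ}
    {N : (Fin m → ℝ) → Matrix (Fin q) (Fin r) ℝ}
    (hM : ES O M) (hN : ES O N) : ES O (fun x => M x * N x) := fun a b => by
  have : (fun x => (M x * N x) a b) = fun x => ∑ j, M x a j * N x j b := by
    ext x; simp [Matrix.mul_apply]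
  rw [this]
  exact ContDiffOn.sum fun j _ => (hM a j).mul (hN j b)

lemma ES.finsetSum {p q : ℕ} {ι : Type*} (s : Finset ι)
    {M : ι → (Fin m → ℝ) → Matrix (Fin p) (Fin q) ℝ}
    (h : ∀ i ∈ s, ES O (M i)) : ES O (fun x => ∑ i ∈ s, M i x) := fun a b => by
  have : (fun x => (∑ i ∈ s, M i x) a b) = fun x => ∑ i ∈ s, M i x a b := by
    ext x; simp [Matrix.sum_apply]
  rw [this]
  exact ContDiffOn.sum fun i hi => h i hi a b

lemma contDiffOn_finsetProd {ι : Type*} (s : Finset ι) {f : ι → (Fin m → ℝ) → ℝ}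
    (h : ∀ i ∈ s, ContDiffOn ℝ (⊤ : ℕ∞) (f i) O) :
    ContDiffOn ℝ (⊤ : ℕ∞) (fun x => ∏ i ∈ s, f i x) O := by
  classical
  induction s using Finset.induction_on with
  | empty => simpa using (contDiffOn_const : ContDiffOn ℝ (⊤ : ℕ∞) (fun _ => (1:ℝ)) O)
  | insert _ _ hnot ih =>
    rename_i a s
    simp only [Finset.prod_insert hnot]
    exact (h a (Finset.mem_insert_self a s)).mul
      (ih fun i hi => h i (Finset.mem_insert_of_mem hi))

lemma ES.det {p : ℕ} {M : (Fin m → ℝ) → Matrix (Fin p) (Fin p) ℝ}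
    (hM : ES O M) : ContDiffOn ℝ (⊤ : ℕ∞) (fun x => (M x).det) O := by
  have : (fun x => (M x).det)
      = fun x => ∑ σ : Equiv.Perm (Fin p),
          ((Equiv.Perm.sign σ : ℤ) : ℝ) * ∏ i, M x (σ i) i := by
    ext x; rw [Matrix.det_apply]; simp [Units.smul_def, zsmul_eq_mul]
  rw [this]
  exact ContDiffOn.sum fun σ _ =>
    contDiffOn_const.mul (contDiffOn_finsetProd _ fun i _ => hM (σ i) i)

lemma ES.inv {p : ℕ} {M : (Fin m → ℝ) → Matrix (Fin p) (Fin p) ℝ}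
    (hM : ES O M) (hu : ∀ x ∈ O, IsUnit (M x)) : ES O (fun x => (M x)⁻¹) := by
  intro a b
  have key : ∀ x, (M x)⁻¹ a b = ((M x).det)⁻¹ * (M x).adjugate a b := by
    intro x
    rw [Matrix.inv_def]
    simp [Ring.inverse_eq_inv', Matrix.smul_apply, smul_eq_mul]
  simp only [key]
  refine ContDiffOn.mul (ContDiffOn.inv hM.det ?_) ?_
  · intro x hx
    exact ((Matrix.isUnit_iff_isUnit_det _).mp (hu x hx)).ne_zero
  · have : (fun x => (M x).adjugate a b)
        = fun x => ((M x).updateRow b (Pi.single a 1)).det := by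
      ext x; rw [Matrix.adjugate_apply]
    rw [this]
    apply ES.det
    intro c e
    by_cases h : c = b
    · subst h; simp only [Matrix.updateRow_apply, if_pos rfl]
      simpa using (contDiffOn_const : ContDiffOn ℝ (⊤ : ℕ∞) (fun _ => (Pi.single a 1 : Fin p → ℝ) e) O)
    · simp only [Matrix.updateRow_apply, if_neg h]
      exact hM c e

lemma ES.mixlam {p q : ℕ} (M : Fin (m + 1) → Matrix (Fin p) (Fin q) ℝ) :
    ES O (fun lam => lamMix M lam) := by
  intro a b
  have : (fun lam : Fin m → ℝ => lamMix M lam a b)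
      = fun lam => M 0 a b + ∑ i : Fin m, lam i * M i.succ a b := by
    ext lam; simp [lamMix, Matrix.add_apply, Matrix.sum_apply, Matrix.smul_apply, smul_eq_mul]
  rw [this]
  refine contDiffOn_const.add (ContDiffOn.sum fun i _ => ContDiffOn.mul ?_ contDiffOn_const)
  exact (ContinuousLinearMap.proj (R := ℝ) (φ := fun _ : Fin m => ℝ) i).contDiff.contDiffOn

end AuxES

/-- For every `k = d,…,N+1`, every `i = 1,…,m`, and every bounded subset `S`
of the nonnegative orthant, the functions `λ ↦ Z_k(λ)`, `λ ↦ X_k(λ)` and their partial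
derivatives `λ ↦ ∇_{λ_i} Z_k(λ)`, `λ ↦ ∇_{λ_i} X_k(λ)` are bounded on `S` and Lipschitz
continuous on `S` (stated entrywise). -/
theorem stmt9 {n mu m : ℕ} (hn : 0 < n) (hmu : 0 < mu) (d N : ℕ) (hd : 1 ≤ d) (hN : d ≤ N)
    (σ : ℝ) (hσ : 0 < σ)
    (A Abar : Matrix (Fin n) (Fin n) ℝ) (B Bbar : Matrix (Fin n) (Fin mu) ℝ)
    (Q : Fin (m + 1) → Matrix (Fin n) (Fin n) ℝ)
    (R : Fin (m + 1) → Matrix (Fin mu) (Fin mu) ℝ)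
    (F : Fin (m + 1) → Matrix (Fin n) (Fin n) ℝ)
    (hQ : ∀ i, (Q i).PosDef) (hR : ∀ i, (R i).PosDef) (hF : ∀ i, (F i).PosDef)
    -- the Riccati-ZXL solutions, defined on an open neighborhood `O` of the orthant
    (O : Set (Fin m → ℝ)) (hO : IsOpen O)
    (horth : {lam : Fin m → ℝ | ∀ i, 0 ≤ lam i} ⊆ O)
    (Z X : (Fin m → ℝ) → ℕ → Matrix (Fin n) (Fin n) ℝ)
    (hZX : ∀ lam ∈ O, RiccatiZXL d N σ A Abar B Bbar (lamMix Q lam) (lamMix R lam)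
        (lamMix F lam) (Z lam) (X lam))
    (hUps : ∀ lam ∈ O, ∀ k, d ≤ k → k ≤ N →
        IsUnit (Upsf σ B Bbar (lamMix R lam) (Z lam) (X lam) k))
    -- their partial derivatives, which exist on `O`
    (DZ DX : (Fin m → ℝ) → Fin m → ℕ → Matrix (Fin n) (Fin n) ℝ)
    (hD : ∀ lam ∈ O, ∀ i : Fin m, ∀ k, d ≤ k → k ≤ N + 1 → ∀ a b,
        HasDerivAt (fun t : ℝ => Z (Function.update lam i t) k a b)
          (DZ lam i k a b) (lam i) ∧
        HasDerivAt (fun t : ℝ => X (Function.update lam i t) k a b)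
          (DX lam i k a b) (lam i)) :
    ∀ S : Set (Fin m → ℝ), S ⊆ {lam | ∀ i, 0 ≤ lam i} → Bornology.IsBounded S →
      ∀ k, d ≤ k → k ≤ N + 1 → ∀ (i : Fin m) (a b : Fin n),
        (∃ C : ℝ, ∀ lam ∈ S, |Z lam k a b| ≤ C) ∧
        (∃ K : NNReal, LipschitzOnWith K (fun lam => Z lam k a b) S) ∧
        (∃ C : ℝ, ∀ lam ∈ S, |X lam k a b| ≤ C) ∧
        (∃ K : NNReal, LipschitzOnWith K (fun lam => X lam k a b) S) ∧
        (∃ C : ℝ, ∀ lam ∈ S, |DZ lam i k a b| ≤ C) ∧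
        (∃ K : NNReal, LipschitzOnWith K (fun lam => DZ lam i k a b) S) ∧
        (∃ C : ℝ, ∀ lam ∈ S, |DX lam i k a b| ≤ C) ∧
        (∃ K : NNReal, LipschitzOnWith K (fun lam => DX lam i k a b) S) := by
  classical
  have hQsm : ES O (fun lam => lamMix Q lam) := ES.mixlam Q
  have hRsm : ES O (fun lam => lamMix R lam) := ES.mixlam R
  have hFsm : ES O (fun lam => lamMix F lam) := ES.mixlam F
  have hUpsSm : ∀ j, ES O (fun lam => Z lam (j + 1)) → ES O (fun lam => X lam (j + 1)) →
      ES O (fun lam => Upsf σ B Bbar (lamMix R lam) (Z lam) (X lam) j) := by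
    intro j hZ hX
    simp only [Upsf]
    exact ((((ES.const Bᵀ).mul hZ).mul (ES.const B)).add
      (ES.smul _ (((ES.const Bbarᵀ).mul hX).mul (ES.const Bbar)))).add hRsm
  have hMSm : ∀ j, ES O (fun lam => Z lam (j + 1)) → ES O (fun lam => X lam (j + 1)) →
      ES O (fun lam => Mf σ A Abar B Bbar (Z lam) (X lam) j) := by
    intro j hZ hX
    simp only [Mf]
    exact (((ES.const Bᵀ).mul hZ).mul (ES.const A)).add
      (ES.smul _ (((ES.const Bbarᵀ).mul hX).mul (ES.const Abar)))
  have hLSm : ∀ j, d ≤ j →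
      (j ≤ N → ES O (fun lam => Z lam (j + 1)) ∧ ES O (fun lam => X lam (j + 1))) →
      ES O (fun lam => Lf N σ A Abar B Bbar (lamMix R lam) (Z lam) (X lam) j) := by
    intro j hdj h
    by_cases hj : j ≤ N
    · obtain ⟨hZ, hX⟩ := h hj
      simp only [Lf, if_pos hj]
      have hM := hMSm j hZ hX
      have hU := hUpsSm j hZ hX
      exact (hM.transpose.mul (hU.inv fun lam hlam => hUps lam hlam j hdj hj)).mul hM
    · simp only [Lf, if_neg hj]
      exact ES.const 0
  have key : ∀ j k, d ≤ k → k ≤ N + 1 → N + 1 ≤ k + j →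
      ES O (fun lam => Z lam k) ∧ ES O (fun lam => X lam k) := by
    intro j
    induction j with
    | zero =>
      intro k h1 h2 h3
      have hk : k = N + 1 := by omega
      subst hk
      constructor <;> intro a b
      · exact (hFsm a b).congr fun lam hlam => congrFun (congrFun (hZX lam hlam).1 a) b
      · exact (hFsm a b).congr fun lam hlam => congrFun (congrFun (hZX lam hlam).2.1 a) b
    | succ j ih =>
      intro k h1 h2 h3
      by_cases hk : N + 1 ≤ k + j
      · exact ih k h1 h2 hk
      · have hkN : k ≤ N := by omega
        have IH : ∀ k', k < k' → k' ≤ N + 1 →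
            ES O (fun lam => Z lam k') ∧ ES O (fun lam => X lam k') :=
          fun k' ha hb => ih k' (by omega) hb (by omega)
        have hZk : ES O (fun lam => Z lam k) := by
          have h1' := IH (k + 1) (by omega) (by omega)
          have hRHS : ES O (fun lam =>
              Aᵀ * Z lam (k + 1) * A + σ ^ 2 • (Abarᵀ * X lam (k + 1) * Abar) + lamMix Q lam
                - Lf N σ A Abar B Bbar (lamMix R lam) (Z lam) (X lam) k) :=
            ((((ES.const Aᵀ).mul h1'.1).mul (ES.const A)).add
              (ES.smul _ (((ES.const Abarᵀ).mul h1'.2).mul (ES.const Abar))) |>.add hQsm).sub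
              (hLSm k h1 fun _ => h1')
          intro a b
          exact (hRHS a b).congr fun lam hlam =>
            congrFun (congrFun ((hZX lam hlam).2.2 k h1 hkN).1 a) b
        refine ⟨hZk, ?_⟩
        have hXk : ES O (fun lam => Z lam k + ∑ i ∈ Finset.range d,
            (Aᵀ) ^ i * Lf N σ A Abar B Bbar (lamMix R lam) (Z lam) (X lam) (k + i) * A ^ i) := by
          refine hZk.add (ES.finsetSum _ fun i hi => ?_)
          exact ((ES.const ((Aᵀ) ^ i)).mul
            (hLSm (k + i) (by omega) fun hle => IH (k + i + 1) (by omega) (by omega))).mul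
            (ES.const (A ^ i))
        intro a b
        exact (hXk a b).congr fun lam hlam =>
          congrFun (congrFun ((hZX lam hlam).2.2 k h1 hkN).2 a) b
  have keyZX : ∀ k, d ≤ k → k ≤ N + 1 →
      ES O (fun lam => Z lam k) ∧ ES O (fun lam => X lam k) :=
    fun k h1 h2 => key (N + 1) k h1 h2 (by omega)
  have main_deriv : ∀ (i : Fin m) (f g : (Fin m → ℝ) → ℝ), ContDiffOn ℝ (⊤ : ℕ∞) f O →
      (∀ lam ∈ O, HasDerivAt (fun t => f (Function.update lam i t)) (g lam) (lam i)) →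
      ContDiffOn ℝ (⊤ : ℕ∞) g O := by
    intro i f g hf hg
    have hfd : ∀ lam ∈ O, DifferentiableAt ℝ f lam := fun lam hlam =>
      ((hf.differentiableOn (by simp)) lam hlam).differentiableAt (hO.mem_nhds hlam)
    have hcurve : ∀ lam : Fin m → ℝ,
        HasDerivAt (fun t => Function.update lam i t) (Pi.single i 1) (lam i) := by
      intro lam
      rw [hasDerivAt_pi]
      intro j
      by_cases h : j = i
      · subst h
        simp only [Function.update_self, Pi.single_eq_same]
        exact hasDerivAt_id _
      · simp only [Function.update_of_ne h, Pi.single_eq_of_ne h]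
        exact hasDerivAt_const _ _
    have heq : ∀ lam ∈ O, g lam = fderiv ℝ f lam (Pi.single i 1) := by
      intro lam hlam
      have h0 : HasFDerivAt f (fderiv ℝ f lam) (Function.update lam i (lam i)) := by
        rw [Function.update_eq_self]
        exact (hfd lam hlam).hasFDerivAt
      have h1 := h0.comp_hasDerivAt (lam i) (hcurve lam)
      exact (hg lam hlam).unique h1
    refine ContDiffOn.congr ?_ heq
    have h2 : ContDiffOn ℝ (⊤ : ℕ∞) (fderiv ℝ f) O := hf.fderiv_of_isOpen hO (mod_cast le_top)
    exact (ContinuousLinearMap.apply ℝ ℝ (Pi.single i 1 : Fin m → ℝ)).contDiff.comp_contDiffOn h2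
  have final : ∀ g : (Fin m → ℝ) → ℝ, ContDiffOn ℝ (⊤ : ℕ∞) g O →
      ∀ S : Set (Fin m → ℝ), S ⊆ {lam | ∀ i, 0 ≤ lam i} → Bornology.IsBounded S →
      (∃ C : ℝ, ∀ lam ∈ S, |g lam| ≤ C) ∧ ∃ K : NNReal, LipschitzOnWith K g S := by
    intro g hg S hS hSb
    obtain ⟨r, hr⟩ := hSb.subset_closedBall 0
    set T : Set (Fin m → ℝ) := {x | ∀ i, 0 ≤ x i} ∩ Metric.closedBall 0 r with hT
    have hTO : T ⊆ O := fun x hx => horth hx.1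
    have hST : S ⊆ T := fun x hx => ⟨hS hx, hr hx⟩
    have hTconv : Convex ℝ T := by
      refine Convex.inter ?_ (convex_closedBall 0 r)
      intro x hx y hy a b ha hb hab i
      show 0 ≤ a * x i + b * y i
      exact add_nonneg (mul_nonneg ha (hx i)) (mul_nonneg hb (hy i))
    have hTcl : IsClosed {x : Fin m → ℝ | ∀ i, 0 ≤ x i} := by
      have : {x : Fin m → ℝ | ∀ i, 0 ≤ x i} = ⋂ i, {x | 0 ≤ x i} := by
        ext x; simp [Set.mem_iInter]
      rw [this]
      exact isClosed_iInter fun i => isClosed_le continuous_const (continuous_apply i)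
    have hTcp : IsCompact T := (isCompact_closedBall 0 r).inter_left hTcl
    constructor
    · obtain ⟨C, hC⟩ := hTcp.exists_bound_of_continuousOn ((hg.continuousOn).mono hTO)
      exact ⟨C, fun lam hlam => by simpa [Real.norm_eq_abs] using hC lam (hST hlam)⟩
    · have hdiff : ∀ x ∈ T, DifferentiableAt ℝ g x := fun x hx =>
        ((hg.differentiableOn (by simp)) x (hTO hx)).differentiableAt (hO.mem_nhds (hTO hx))
      have hcont : ContinuousOn (fun x => ‖fderiv ℝ g x‖) T :=
        ((hg.continuousOn_fderiv_of_isOpen hO (mod_cast le_top)).mono hTO).norm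
      obtain ⟨C, hC⟩ := hTcp.exists_bound_of_continuousOn hcont
      refine ⟨⟨max C 0, le_max_right _ _⟩, LipschitzOnWith.mono ?_ hST⟩
      refine Convex.lipschitzOnWith_of_nnnorm_fderiv_le hdiff ?_ hTconv
      intro x hx
      have h' : ‖fderiv ℝ g x‖ ≤ max C 0 :=
        le_trans (by simpa using hC x hx) (le_max_left _ _)
      exact_mod_cast h'
  intro S hS hSb k hdk hkN i a b
  obtain ⟨hZs, hXs⟩ := keyZX k hdk hkN
  have hDZs : ContDiffOn ℝ (⊤ : ℕ∞) (fun lam => DZ lam i k a b) O :=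
    main_deriv i _ _ (hZs a b) fun lam hlam => (hD lam hlam i k hdk hkN a b).1
  have hDXs : ContDiffOn ℝ (⊤ : ℕ∞) (fun lam => DX lam i k a b) O :=
    main_deriv i _ _ (hXs a b) fun lam hlam => (hD lam hlam i k hdk hkN a b).2
  obtain ⟨h1, h2⟩ := final _ (hZs a b) S hS hSb
  obtain ⟨h3, h4⟩ := final _ (hXs a b) S hS hSb
  obtain ⟨h5, h6⟩ := final _ hDZs S hS hSb
  obtain ⟨h7, h8⟩ := final _ hDXs S hS hSb
  exact ⟨h1, h2, h3, h4, h5, h6, h7, h8⟩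

end
end
end
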